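/- Let φ : G → G′ be a morphism of simplicial groups which is a Kan fibration, let G act on X and G′ act on X′ with both orbit spaces X/G and X′/G′ discrete, and let f : X → X′ be φ-equivariant (f(g·x) = φ(g)·f(x)). Then f is a Kan fibration of simplicial sets. -/

import Mathlib

open CategoryTheory SSet Simplicial Opposite

/-- An action of a simplicial group `G` (a functor to `Grp`) on a simplicial
set `X`: levelwise group actions compatible with the simplicial operators. -/
structure SimplicialAction (G : SimplexCategoryᵒᵖ ⥤ GrpCat.{0}) (X : SSet.{0}) where
  act : ∀ n : SimplexCategoryᵒᵖ, ∀ _ : G.obj n, X.obj n → X.obj n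
  one_act : ∀ (n) (x : X.obj n), act n 1 x = x
  mul_act : ∀ (n) (g h : G.obj n) (x : X.obj n),
    act n (g * h) x = act n g (act n h x)
  naturality : ∀ {n m : SimplexCategoryᵒᵖ} (φ : n ⟶ m) (g : G.obj n) (x : X.obj n),
    X.map φ (act n g x) = act m (G.map φ g) (X.map φ x)

/-- The (iterated) degenerate simplex `s₀ⁿ(v)` of a vertex `v`, at an
arbitrary simplicial level. -/
def vtx (X : SSet.{0}) (v : X _⦋0⦌) (n : SimplexCategoryᵒᵖ) : X.obj n :=
  X.map (SimplexCategory.const n.unop (SimplexCategory.mk 0) 0).op v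

variable {G : SimplexCategoryᵒᵖ ⥤ GrpCat.{0}} {X : SSet.{0}}

/-- The orbit `Gv ⊆ X` of a vertex `v`, levelwise. -/
def orbitSet (A : SimplicialAction G X) (v : X _⦋0⦌) (n : SimplexCategoryᵒᵖ) :
    Set (X.obj n) :=
  {x | ∃ g : G.obj n, x = A.act n g (vtx X v n)}

/-- The stabilizer `G_v ⊆ G` of a vertex `v`, levelwise. -/
def stabSet (A : SimplicialAction G X) (v : X _⦋0⦌) (n : SimplexCategoryᵒᵖ) :
    Set (G.obj n) :=
  {g | A.act n g (vtx X v n) = vtx X v n}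

/-- The canonical degeneracy map `G_0 → G_n`. -/
def degMap (G : SimplexCategoryᵒᵖ ⥤ GrpCat.{0}) (n : SimplexCategoryᵒᵖ) :
    G.obj (op (SimplexCategory.mk 0)) → G.obj n :=
  G.map (SimplexCategory.const n.unop (SimplexCategory.mk 0) 0).op

/-- A map of simplicial sets is a *Kan fibration* if it has the right lifting
property with respect to all horn inclusions `Λ[n, i] ⟶ Δ[n]` (`n ≥ 1`). -/
def IsKanFibration {S T : SSet} (f : S ⟶ T) : Prop :=
  ∀ (n : ℕ) (i : Fin (n + 2)), HasLiftingProperty (Λ[n + 1, i].ι) f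

/-!
Since `X/G` is discrete, every simplex of `X` is a translate `g • s(v)` of the degenerate simplex
on any one of its vertices `v`. So a horn in `X` with vertex `v` at `i` has faces `h_j • s(v)`, the
`h_j` agreeing on common faces modulo the stabilizer `G_v`, and the simplex below it in `X'` is
`g' • s(f v)`. Moore's proof that simplicial groups are Kan complexes works verbatim modulo a
simplicial subgroup `Q` and inside a simplicial subgroup `P`. It fills the `h_j` modulo `G_v` by
some `Γ`, and then corrects `g'` inside `G'_{f v}` so that its faces become `φ (d_j Γ)`. Lifting
this along the Kan fibration `φ` gives `L` with `L • s(v)` filling the horn.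
-/

open SimplexCategory

namespace SimplexCategory

lemma exists_δ_comp_σ_eq_σ_comp_δ {p : ℕ} {r : Fin (p + 2)} {u j : Fin (p + 3)}
    (hur : u = r.castSucc ∨ u = r.succ) (hjr : j ≠ r.castSucc) (hjr' : j ≠ r.succ) :
    ∃ (r' : Fin (p + 1)) (j' a : Fin (p + 2)),
      δ j ≫ σ r = σ r' ≫ δ j' ∧ δ a ≫ δ j = δ j' ≫ δ u := by
  have hu : u.val = r.val ∨ u.val = r.val + 1 := by rcases hur with rfl | rfl <;> simp
  have hj : j.val ≠ r.val := fun h => hjr (Fin.ext h)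
  have hj' : j.val ≠ r.val + 1 := fun h => hjr' (Fin.ext h)
  rcases Nat.lt_or_gt_of_ne hj with hlt | hgt
  · obtain ⟨j', rfl⟩ : ∃ j' : Fin (p + 2), j = j'.castSucc := ⟨⟨j, by omega⟩, rfl⟩
    obtain ⟨r', rfl⟩ : ∃ r' : Fin (p + 1), r = r'.succ := ⟨⟨r - 1, by omega⟩, by ext; simp; omega⟩
    obtain ⟨a, rfl⟩ : ∃ a : Fin (p + 2), u = a.succ := ⟨⟨u - 1, by omega⟩, by ext; simp; omega⟩
    refine ⟨r', j', a, δ_comp_σ_of_le ?_, (δ_comp_δ ?_).symm⟩ <;>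
      simp only [Fin.le_def, Fin.val_castSucc, Fin.val_succ] at * <;> omega
  · obtain ⟨j', rfl⟩ : ∃ j' : Fin (p + 2), j = j'.succ := ⟨⟨j - 1, by omega⟩, by ext; simp; omega⟩
    obtain ⟨r', rfl⟩ : ∃ r' : Fin (p + 1), r = r'.castSucc := ⟨⟨r, by omega⟩, rfl⟩
    obtain ⟨a, rfl⟩ : ∃ a : Fin (p + 2), u = a.castSucc := ⟨⟨u, by omega⟩, rfl⟩
    refine ⟨r', j', a, δ_comp_σ_of_gt ?_, δ_comp_δ ?_⟩ <;>
      simp only [Fin.lt_def, Fin.le_def, Fin.val_castSucc, Fin.val_succ] at * <;> omega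

lemma exists_comp_δ_eq_const {n : ℕ} {i j : Fin (n + 2)} (hj : j ≠ i) :
    ∃ θ : ⦋0⦌ ⟶ ⦋n⦌, θ ≫ δ j = const _ _ i := by
  obtain ⟨k, hk⟩ := Fin.exists_succAbove_eq (Ne.symm hj)
  exact ⟨const _ _ k, by rw [const_comp, ← hk]; rfl⟩

end SimplexCategory

namespace SSet

variable {n : ℕ} {i : Fin (n + 2)}

lemma horn.map_face_eq {j k : Fin (n + 2)} (hj : j ≠ i) (hk : k ≠ i) {m : SimplexCategory}
    {a b : m ⟶ ⦋n⦌} (h : a ≫ δ j = b ≫ δ k) :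
    (Λ[n + 1, i] : SSet.{u}).map a.op (horn.face i j hj) =
      (Λ[n + 1, i] : SSet.{u}).map b.op (horn.face i k hk) :=
  Subtype.ext (congrArg stdSimplex.objEquiv.symm h)

def horn.vertex (i : Fin (n + 2)) : (Λ[n + 1, i] : SSet.{u}) _⦋0⦌ :=
  ⟨stdSimplex.objEquiv.symm (SimplexCategory.const _ _ i), fun h => by
    have := Set.eq_univ_iff_forall.mp h (i.succAbove 0)
    simp at this
    exact Fin.succAbove_ne i 0 this.symm⟩

lemma horn.map_face_eq_vertex {j : Fin (n + 2)} (hj : j ≠ i) {θ : ⦋0⦌ ⟶ ⦋n⦌}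
    (h : θ ≫ δ j = SimplexCategory.const _ _ i) :
    (Λ[n + 1, i] : SSet.{u}).map θ.op (horn.face i j hj) = horn.vertex i :=
  Subtype.ext (congrArg stdSimplex.objEquiv.symm h)

variable {S T : SSet.{u}} {p : S ⟶ T}

lemma _root_.CategoryTheory.CommSq.app_horn_eq {α : (Λ[n + 1, i] : SSet.{u}) ⟶ S}
    {β : Δ[n + 1] ⟶ T} (sq : CommSq α Λ[n + 1, i].ι p β) {m : SimplexCategory}
    (x : (Λ[n + 1, i] : SSet.{u}).obj (op m)) :
    p.app _ (α.app _ x) = T.map (stdSimplex.objEquiv x.1).op (yonedaEquiv β) := by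
  have := congrArg (fun γ => γ.app (op m) x) sq.w
  simp only [NatTrans.comp_app, types_comp_apply] at this
  rw [this]
  conv_lhs => rw [← yonedaEquiv.symm_apply_apply β]
  rfl

lemma hasLift_of_simplex {α : (Λ[n + 1, i] : SSet.{u}) ⟶ S} {β : Δ[n + 1] ⟶ T}
    (sq : CommSq α Λ[n + 1, i].ι p β) (y : S _⦋n + 1⦌)
    (hy : ∀ j (hj : j ≠ i), S.δ j y = α.app _ (horn.face i j hj))
    (hpy : p.app _ y = yonedaEquiv β) : sq.HasLift :=
  ⟨⟨{ l := yonedaEquiv.symm y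
      fac_left := horn.hom_ext _ _ hy
      fac_right := yonedaEquiv.injective (by rw [yonedaEquiv_comp, Equiv.apply_symm_apply, hpy]) }⟩⟩

lemma exists_lift_of_hasLiftingProperty_horn (hp : HasLiftingProperty Λ[n + 1, i].ι p)
    (z : S _⦋n + 1⦌) (b : T _⦋n + 1⦌) (h : ∀ j ≠ i, p.app _ (S.δ j z) = T.δ j b) :
    ∃ y, (∀ j ≠ i, S.δ j y = S.δ j z) ∧ p.app _ y = b := by
  have sq : CommSq (Λ[n + 1, i].ι ≫ yonedaEquiv.symm z) Λ[n + 1, i].ι p (yonedaEquiv.symm b) :=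
    ⟨horn.hom_ext _ _ h⟩
  obtain ⟨L, hL, hL'⟩ := (hp.sq_hasLift sq).exists_lift
  refine ⟨yonedaEquiv L, fun j hj => ?_, ?_⟩
  · rw [← yonedaEquiv.apply_symm_apply z, ← stdSimplex.yonedaEquiv_δ_comp,
      ← stdSimplex.yonedaEquiv_δ_comp, ← horn.ι_ι i j hj,
      Category.assoc, Category.assoc, hL]
  · rw [← yonedaEquiv_comp, hL', Equiv.apply_symm_apply]

end SSet

structure SimplicialSubgroup (K : SimplicialObject GrpCat.{u}) where
  obj : ∀ n : SimplexCategoryᵒᵖ, Subgroup (K.obj n)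
  map_mem : ∀ {n m : SimplexCategoryᵒᵖ} (f : n ⟶ m) {a : K.obj n}, a ∈ obj n → K.map f a ∈ obj m

namespace SimplicialSubgroup

variable {K : SimplicialObject GrpCat.{u}}

instance : Top (SimplicialSubgroup K) := ⟨⟨fun _ => ⊤, fun _ _ _ => trivial⟩⟩

instance : Bot (SimplicialSubgroup K) :=
  ⟨⟨fun _ => ⊥, fun f _ ha => by rw [Subgroup.mem_bot] at ha ⊢; rw [ha, map_one]⟩⟩

/-- Agreement modulo `Q` is equality in the coset space `K ⧸ Q`; when `Q` is the stabilizer of a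
vertex `v`, it is equality of the translates of `v`. -/
def FacesCompatible (Q : SimplicialSubgroup K) {n : ℕ} (i : Fin (n + 2))
    (x : Fin (n + 2) → K _⦋n⦌) : Prop :=
  ∀ j k, j ≠ i → k ≠ i → ∀ {m : SimplexCategory} (a b : m ⟶ ⦋n⦌), a ≫ δ j = b ≫ δ k →
    (K.map a.op (x j))⁻¹ * K.map b.op (x k) ∈ Q.obj (op m)

def FillsMod (Q : SimplicialSubgroup K) {n : ℕ} (x : Fin (n + 2) → K _⦋n⦌)
    (T : Set (Fin (n + 2))) (w : K _⦋n + 1⦌) : Prop :=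
  ∀ j ∈ T, (x j)⁻¹ * K.δ j w ∈ Q.obj _

lemma facesCompatible_δ (Q : SimplicialSubgroup K) {n : ℕ} (i : Fin (n + 2)) (w : K _⦋n + 1⦌) :
    Q.FacesCompatible i (fun j => K.δ j w) := by
  intro j k _ _ m a b hab
  simp only [SimplicialObject.δ_def, ← Functor.map_comp_apply, ← op_comp, hab, inv_mul_cancel]
  exact one_mem _

section Moore

variable (P Q : SimplicialSubgroup K) {p : ℕ} {i : Fin (p + 3)} {x : Fin (p + 3) → K _⦋p + 1⦌}

lemma δ_inv_δ_mul_mem (compat : Q.FacesCompatible i x) {j u : Fin (p + 3)} (hj : j ≠ i)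
    (hu : u ≠ i) {w : K _⦋p + 2⦌} (hw : (x j)⁻¹ * K.δ j w ∈ Q.obj _) {a j' : Fin (p + 2)}
    (h : δ a ≫ δ j = δ j' ≫ δ u) :
    K.δ j' ((K.δ u w)⁻¹ * x u) ∈ Q.obj _ := by
  have hδδ : K.δ j' (K.δ u w) = K.δ a (x j) * K.δ a ((x j)⁻¹ * K.δ j w) := by
    rw [← map_mul, mul_inv_cancel_left]
    simp only [SimplicialObject.δ_def, ← Functor.map_comp_apply, ← op_comp, h]
  rw [map_mul, map_inv, hδδ, mul_inv_rev, mul_assoc]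
  exact mul_mem (inv_mem (Q.map_mem _ hw)) (compat j u hj hu (δ a) (δ j') h)

/-- Moore's step: multiplying `w` by the degeneracy `s_r` of its error in face `u` repairs that face
and leaves the faces in `T` correct modulo `Q`. -/
lemma exists_fillsMod_insert (hxP : ∀ j ≠ i, x j ∈ P.obj _) (compat : Q.FacesCompatible i x)
    {T : Set (Fin (p + 3))} (hiT : i ∉ T) {w : K _⦋p + 2⦌} (hwP : w ∈ P.obj _)
    (hw : Q.FillsMod x T w) {u : Fin (p + 3)} {r : Fin (p + 2)} (hui : u ≠ i)
    (hur : u = r.castSucc ∨ u = r.succ) (hT : ∀ j ∈ T, j = r.castSucc ∨ j = r.succ → j = u) :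
    ∃ w' ∈ P.obj _, Q.FillsMod x (insert u T) w' := by
  set z := (K.δ u w)⁻¹ * x u
  have hzP : z ∈ P.obj _ := mul_mem (inv_mem (P.map_mem _ hwP)) (hxP u hui)
  refine ⟨w * K.σ r z, mul_mem hwP (P.map_mem _ hzP), ?_⟩
  have hδσ : K.δ u (K.σ r z) = z := by
    rcases hur with rfl | rfl
    exacts [ConcreteCategory.congr_hom K.δ_comp_σ_self z,
      ConcreteCategory.congr_hom K.δ_comp_σ_succ z]
  have hδu : (x u)⁻¹ * K.δ u (w * K.σ r z) ∈ Q.obj _ := by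
    rw [map_mul, hδσ, mul_inv_cancel_left, inv_mul_cancel]
    exact one_mem _
  rintro j (rfl | hjT)
  · exact hδu
  by_cases hju : j = u
  · exact hju ▸ hδu
  obtain ⟨r', j', a, hσ, hδ⟩ := exists_δ_comp_σ_eq_σ_comp_δ hur
    (fun h => hju (hT j hjT (.inl h))) (fun h => hju (hT j hjT (.inr h)))
  have hδσ' : K.δ j (K.σ r z) = K.σ r' (K.δ j' z) := by
    simp only [SimplicialObject.δ_def, SimplicialObject.σ_def, ← Functor.map_comp_apply,
      ← op_comp, hσ]
  rw [map_mul, hδσ', ← mul_assoc]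
  exact mul_mem (hw j hjT) (Q.map_mem _
    (δ_inv_δ_mul_mem Q compat (ne_of_mem_of_not_mem hjT hiT) hui (hw j hjT) hδ))

/-- The faces below `i` are filled in increasing order, then those above `i` in decreasing order. -/
lemma exists_fillsMod_lt (hxP : ∀ j ≠ i, x j ∈ P.obj _) (compat : Q.FacesCompatible i x) :
    ∀ k ≤ i.val, ∃ w ∈ P.obj _, Q.FillsMod x {j | j.val < k} w := by
  intro k hk
  induction k with
  | zero => exact ⟨1, one_mem _, fun j hj => absurd hj (Nat.not_lt_zero _)⟩
  | succ k ih =>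
    obtain ⟨w, hwP, hw⟩ := ih (by omega)
    have hT : {j | j.val < k + 1} = insert (⟨k, by omega⟩ : Fin (p + 3)) {j | j.val < k} := by
      ext j; simp only [Set.mem_ofPred_eq, Set.mem_insert_iff, Fin.ext_iff]; omega
    rw [hT]
    exact exists_fillsMod_insert P Q hxP compat (by simp; omega) hwP hw (r := ⟨k, by omega⟩)
      (by simp [Fin.ext_iff]; omega) (.inl rfl)
      (fun j hj hjr => by rcases hjr with rfl | rfl <;> simp at hj)

lemma exists_fillsMod_lt_or_ge (hxP : ∀ j ≠ i, x j ∈ P.obj _) (compat : Q.FacesCompatible i x) :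
    ∀ k ≤ p + 2 - i.val,
      ∃ w ∈ P.obj _, Q.FillsMod x {j | j.val < i.val ∨ p + 3 - k ≤ j.val} w := by
  intro k hk
  induction k with
  | zero =>
    obtain ⟨w, hwP, hw⟩ := exists_fillsMod_lt P Q hxP compat i.val le_rfl
    refine ⟨w, hwP, fun j hj => hw j ?_⟩
    simp only [Set.mem_ofPred_eq] at hj ⊢
    omega
  | succ k ih =>
    obtain ⟨w, hwP, hw⟩ := ih (by omega)
    have hT : {j | j.val < i.val ∨ p + 3 - (k + 1) ≤ j.val} =
        insert (⟨p + 2 - k, by omega⟩ : Fin (p + 3)) {j | j.val < i.val ∨ p + 3 - k ≤ j.val} := by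
      ext j; simp only [Set.mem_ofPred_eq, Set.mem_insert_iff, Fin.ext_iff]; omega
    rw [hT]
    refine exists_fillsMod_insert P Q hxP compat (by simp; omega) hwP hw
      (r := ⟨p + 1 - k, by omega⟩) (by simp [Fin.ext_iff]; omega) (.inr (by ext; simp; omega)) ?_
    rintro j hj (rfl | rfl) <;> simp only [Set.mem_ofPred_eq] at hj <;> simp at hj ⊢ <;> omega

end Moore

theorem exists_fillsMod_ne (P Q : SimplicialSubgroup K) {n : ℕ} {i : Fin (n + 2)}
    {x : Fin (n + 2) → K _⦋n⦌} (hxP : ∀ j ≠ i, x j ∈ P.obj _) (compat : Q.FacesCompatible i x) :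
    ∃ w ∈ P.obj _, Q.FillsMod x {j | j ≠ i} w := by
  cases n with
  | zero =>
    have hδσ : ∀ (j : Fin 2) (y : K _⦋0⦌), K.δ j (K.σ 0 y) = y := by
      intro j y
      fin_cases j
      · exact ConcreteCategory.congr_hom (K.δ_comp_σ_self (i := 0)) y
      · exact ConcreteCategory.congr_hom (K.δ_comp_σ_succ (i := 0)) y
    have hj₀ : i.succAbove 0 ≠ i := Fin.succAbove_ne i 0
    refine ⟨K.σ 0 (x (i.succAbove 0)), P.map_mem _ (hxP _ hj₀), fun j hj => ?_⟩
    obtain rfl : j = i.succAbove 0 := by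
      simp only [Set.mem_ofPred_eq, ne_eq, Fin.ext_iff] at hj hj₀ ⊢; omega
    rw [hδσ, inv_mul_cancel]
    exact one_mem _
  | succ p =>
    obtain ⟨w, hwP, hw⟩ := exists_fillsMod_lt_or_ge P Q hxP compat _ le_rfl
    refine ⟨w, hwP, fun j hj => hw j ?_⟩
    simp only [Set.mem_ofPred_eq, ne_eq, Fin.ext_iff] at hj ⊢
    omega

theorem exists_lift_mod {G G' : SimplicialObject GrpCat.{u}} (φ : G ⟶ G') {n : ℕ}
    {i : Fin (n + 2)}
    (hφ : HasLiftingProperty Λ[n + 1, i].ι (Functor.whiskerRight φ (forget GrpCat)))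
    (R : SimplicialSubgroup G) (R' : SimplicialSubgroup G')
    (hRR' : ∀ m g, g ∈ R.obj m → φ.app m g ∈ R'.obj m)
    {h : Fin (n + 2) → G _⦋n⦌} (hcompat : R.FacesCompatible i h) (g' : G' _⦋n + 1⦌)
    (hg' : ∀ j ≠ i, (G'.δ j g')⁻¹ * φ.app _ (h j) ∈ R'.obj _) :
    ∃ L : G _⦋n + 1⦌, R.FillsMod h {j | j ≠ i} L ∧ g'⁻¹ * φ.app _ L ∈ R'.obj _ := by
  have hφδ : ∀ j (z : G _⦋n + 1⦌), G'.δ j (φ.app _ z) = φ.app _ (G.δ j z) := fun j z =>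
    (NatTrans.naturality_apply φ _ z).symm
  obtain ⟨Γ, -, hΓ⟩ := exists_fillsMod_ne ⊤ R (x := h) (fun _ _ => trivial) hcompat
  set c := g'⁻¹ * φ.app _ Γ
  have hc : ∀ j ≠ i, G'.δ j c ∈ R'.obj _ := by
    intro j hj
    have : G'.δ j c = (G'.δ j g')⁻¹ * φ.app _ (h j) * φ.app _ ((h j)⁻¹ * G.δ j Γ) := by
      rw [mul_assoc, ← map_mul, mul_inv_cancel_left, map_mul, map_inv, hφδ]
    rw [this]
    exact mul_mem (hg' j hj) (hRR' _ _ (hΓ j hj))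
  obtain ⟨τ, hτR', hτ⟩ := exists_fillsMod_ne R' ⊥ hc (facesCompatible_δ ⊥ i c)
  have hτδ : ∀ j ≠ i, G'.δ j τ = G'.δ j c := fun j hj =>
    (inv_mul_eq_one.mp (Subgroup.mem_bot.mp (hτ j hj))).symm
  obtain ⟨L, hLδ, hLφ⟩ := SSet.exists_lift_of_hasLiftingProperty_horn hφ Γ (g' * τ) fun j hj => by
    show φ.app _ (G.δ j Γ) = G'.δ j (g' * τ)
    rw [map_mul, hτδ j hj, map_mul, map_inv, mul_inv_cancel_left, hφδ]
  refine ⟨L, fun j hj => ?_, ?_⟩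
  · rw [show G.δ j L = G.δ j Γ from hLδ j hj]
    exact hΓ j hj
  · rw [show φ.app _ L = g' * τ from hLφ, inv_mul_cancel_left]
    exact hτR'

end SimplicialSubgroup

lemma map_vtx (X : SSet.{0}) (v : X _⦋0⦌) {m n : SimplexCategoryᵒᵖ} (ψ : m ⟶ n) :
    X.map ψ (vtx X v m) = vtx X v n := by
  rw [vtx, vtx, ← Functor.map_comp_apply]
  congr 2

lemma vtx_zero (X : SSet.{0}) (v : X _⦋0⦌) : vtx X v (op ⦋0⦌) = v := by
  rw [vtx, SimplexCategory.const_eq_id, op_id, Functor.map_id_apply]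

lemma app_vtx {X X' : SSet.{0}} (f : X ⟶ X') (v : X _⦋0⦌) (n : SimplexCategoryᵒᵖ) :
    f.app n (vtx X v n) = vtx X' (f.app _ v) n :=
  NatTrans.naturality_apply f _ v

namespace SimplicialAction

variable (A : SimplicialAction G X)

lemma inv_act_act (n : SimplexCategoryᵒᵖ) (g : G.obj n) (x : X.obj n) :
    A.act n g⁻¹ (A.act n g x) = x := by
  rw [← A.mul_act, inv_mul_cancel, A.one_act]

lemma map_act_vtx (v : X _⦋0⦌) {m n : SimplexCategoryᵒᵖ} (ψ : m ⟶ n) (g : G.obj m) :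
    X.map ψ (A.act m g (vtx X v m)) = A.act n (G.map ψ g) (vtx X v n) := by
  rw [A.naturality, map_vtx]

lemma act_degMap_vtx (v : X _⦋0⦌) (g : G.obj (op ⦋0⦌)) (n : SimplexCategoryᵒᵖ) :
    A.act n (degMap G n g) (vtx X v n) = vtx X (A.act _ g v) n := by
  rw [degMap, vtx, vtx, A.naturality]

lemma exists_act_vtx_map (hsurj : ∀ n (x : X.obj n), ∃ (v : X _⦋0⦌) (g : G.obj n),
      x = A.act n g (vtx X v n))
    {n : SimplexCategoryᵒᵖ} (x : X.obj n) (θ : n ⟶ op ⦋0⦌) :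
    ∃ g : G.obj n, A.act n g (vtx X (X.map θ x) n) = x := by
  obtain ⟨v, g, rfl⟩ := hsurj n x
  refine ⟨g * degMap G n (G.map θ g)⁻¹, ?_⟩
  rw [map_act_vtx, vtx_zero, A.mul_act, act_degMap_vtx, inv_act_act]

lemma exists_act_vtx_vertex_eq_horn_face
    (hsurj : ∀ n (x : X.obj n), ∃ (v : X _⦋0⦌) (g : G.obj n), x = A.act n g (vtx X v n))
    {n : ℕ} {i : Fin (n + 2)} (α : (Λ[n + 1, i] : SSet) ⟶ X) (j : Fin (n + 2)) :
    ∃ g : G _⦋n⦌, ∀ hj : j ≠ i,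
      A.act _ g (vtx X (α.app _ (horn.vertex i)) _) = α.app _ (horn.face i j hj) := by
  by_cases hj : j = i
  · exact ⟨1, fun hj' => absurd hj hj'⟩
  obtain ⟨θ, hθ⟩ := exists_comp_δ_eq_const hj
  obtain ⟨g, hg⟩ := A.exists_act_vtx_map hsurj (α.app _ (horn.face i j hj)) θ.op
  refine ⟨g, fun _ => ?_⟩
  rwa [← NatTrans.naturality_apply, horn.map_face_eq_vertex hj hθ] at hg

def stabilizer (v : X _⦋0⦌) : SimplicialSubgroup G where
  obj n :=
    { carrier := stabSet A v n
      one_mem' := A.one_act n _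
      mul_mem' {a b} ha hb := by
        simp only [stabSet, Set.mem_ofPred_eq] at ha hb ⊢
        rw [A.mul_act, hb, ha]
      inv_mem' {a} ha := by
        simp only [stabSet, Set.mem_ofPred_eq] at ha ⊢
        conv_lhs => rw [← ha]
        exact A.inv_act_act n a _ }
  map_mem := fun ψ _ ha => by
    change A.act _ _ (vtx X v _) = vtx X v _ at ha
    change A.act _ _ (vtx X v _) = vtx X v _
    rw [← map_act_vtx, ha, map_vtx]

lemma inv_mul_mem_stabilizer_iff (v : X _⦋0⦌) {n : SimplexCategoryᵒᵖ} (g h : G.obj n) :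
    g⁻¹ * h ∈ (A.stabilizer v).obj n ↔ A.act n h (vtx X v n) = A.act n g (vtx X v n) := by
  change A.act n (g⁻¹ * h) (vtx X v n) = vtx X v n ↔ _
  rw [A.mul_act]
  constructor
  · intro H
    conv_rhs => rw [← H]
    rw [← A.mul_act, mul_inv_cancel, A.one_act]
  · intro H; rw [H, inv_act_act]

lemma facesCompatible_stabilizer (v : X _⦋0⦌) {n : ℕ} {i : Fin (n + 2)}
    (α : (Λ[n + 1, i] : SSet) ⟶ X) (h : Fin (n + 2) → G _⦋n⦌)
    (hh : ∀ j (hj : j ≠ i), A.act _ (h j) (vtx X v _) = α.app _ (horn.face i j hj)) :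
    (A.stabilizer v).FacesCompatible i h := by
  intro j k hj hk m a b hab
  rw [inv_mul_mem_stabilizer_iff, ← map_act_vtx, ← map_act_vtx, hh j hj, hh k hk,
    ← NatTrans.naturality_apply, ← NatTrans.naturality_apply, horn.map_face_eq hj hk hab]

lemma app_mem_stabilizer {G' : SimplexCategoryᵒᵖ ⥤ GrpCat.{0}} {X' : SSet.{0}}
    (A' : SimplicialAction G' X') (φ : G ⟶ G') (f : X ⟶ X')
    (hequiv : ∀ (n) (g : G.obj n) (x : X.obj n),
      f.app n (A.act n g x) = A'.act n (φ.app n g) (f.app n x))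
    (v : X _⦋0⦌) (n : SimplexCategoryᵒᵖ) (g : G.obj n) (hg : g ∈ (A.stabilizer v).obj n) :
    φ.app n g ∈ (A'.stabilizer (f.app _ v)).obj n := by
  change A.act n g (vtx X v n) = vtx X v n at hg
  change A'.act n _ (vtx X' _ n) = vtx X' _ n
  rw [← app_vtx, ← hequiv, hg]

end SimplicialAction

theorem equivariant_map_isKanFibration_general
    {G G' : SimplexCategoryᵒᵖ ⥤ GrpCat.{0}} {X X' : SSet.{0}}
    (A : SimplicialAction G X) (A' : SimplicialAction G' X')
    (φ : G ⟶ G') (f : X ⟶ X')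
    (hequiv : ∀ (n) (g : G.obj n) (x : X.obj n),
      f.app n (A.act n g x) = A'.act n (φ.app n g) (f.app n x))
    -- discreteness of `X/G`
    (hsurj : ∀ (n) (x : X.obj n), ∃ (v : X _⦋0⦌) (g : G.obj n),
      x = A.act n g (vtx X v n))
    -- discreteness of `X'/G'`
    (hsurj' : ∀ (n) (x : X'.obj n), ∃ (v : X' _⦋0⦌) (g : G'.obj n),
      x = A'.act n g (vtx X' v n))
    -- `φ` is a Kan fibration
    (hφ : IsKanFibration (CategoryTheory.Functor.whiskerRight φ (forget GrpCat))) :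
    IsKanFibration f := by
  intro n i
  refine ⟨fun {α β} sq => ?_⟩
  set v := α.app _ (horn.vertex i)
  choose h hh using A.exists_act_vtx_vertex_eq_horn_face hsurj α
  obtain ⟨g', hg'⟩ := A'.exists_act_vtx_map hsurj' (yonedaEquiv β)
    (SimplexCategory.const ⦋0⦌ ⦋n + 1⦌ i).op
  have hv : X'.map (SimplexCategory.const ⦋0⦌ ⦋n + 1⦌ i).op (yonedaEquiv β) = f.app _ v :=
    (sq.app_horn_eq (horn.vertex i)).symm
  rw [hv] at hg'
  have hg'h : ∀ j ≠ i, (SimplicialObject.δ G' j g')⁻¹ * φ.app _ (h j) ∈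
      (A'.stabilizer (f.app _ v)).obj _ := by
    intro j hj
    have hβ : f.app _ (α.app _ (horn.face i j hj)) = X'.δ j (yonedaEquiv β) :=
      sq.app_horn_eq _
    rw [A'.inv_mul_mem_stabilizer_iff, ← app_vtx, ← hequiv, hh j hj, hβ, ← hg', app_vtx]
    exact A'.map_act_vtx _ _ g'
  obtain ⟨L, hL, hL'⟩ := SimplicialSubgroup.exists_lift_mod φ (hφ n i) (A.stabilizer v)
    (A'.stabilizer (f.app _ v)) (A.app_mem_stabilizer A' φ f hequiv v)
    (A.facesCompatible_stabilizer v α h hh) g' hg'h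
  refine SSet.hasLift_of_simplex sq (A.act _ L (vtx X v _)) (fun j hj => ?_) ?_
  · rw [SimplicialObject.δ_def, A.map_act_vtx, ← hh j hj]
    exact (A.inv_mul_mem_stabilizer_iff v _ _).mp (hL j hj)
  · rw [hequiv, app_vtx, ← hg']
    exact (A'.inv_mul_mem_stabilizer_iff _ _ _).mp hL'

theorem equivariant_map_isKanFibration
    {G G' : SimplexCategoryᵒᵖ ⥤ GrpCat.{0}} {X X' : SSet.{0}}
    (A : SimplicialAction G X) (A' : SimplicialAction G' X')
    (φ : G ⟶ G') (f : X ⟶ X')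
    (hequiv : ∀ (n) (g : G.obj n) (x : X.obj n),
      f.app n (A.act n g x) = A'.act n (φ.app n g) (f.app n x))
    -- discreteness of `X/G`
    (hsurj : ∀ (n) (x : X.obj n), ∃ (v : X _⦋0⦌) (g : G.obj n),
      x = A.act n g (vtx X v n))
    (hinj : ∀ (v w : X _⦋0⦌) (n : SimplexCategoryᵒᵖ),
      (∃ g : G.obj n, A.act n g (vtx X v n) = vtx X w n) →
      ∃ g₀, A.act (op (SimplexCategory.mk 0)) g₀
          (vtx X v (op (SimplexCategory.mk 0))) =
        vtx X w (op (SimplexCategory.mk 0)))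
    -- discreteness of `X'/G'`
    (hsurj' : ∀ (n) (x : X'.obj n), ∃ (v : X' _⦋0⦌) (g : G'.obj n),
      x = A'.act n g (vtx X' v n))
    (hinj' : ∀ (v w : X' _⦋0⦌) (n : SimplexCategoryᵒᵖ),
      (∃ g : G'.obj n, A'.act n g (vtx X' v n) = vtx X' w n) →
      ∃ g₀, A'.act (op (SimplexCategory.mk 0)) g₀
          (vtx X' v (op (SimplexCategory.mk 0))) =
        vtx X' w (op (SimplexCategory.mk 0)))
    -- `φ` is a Kan fibration
    (hφ : IsKanFibration (CategoryTheory.Functor.whiskerRight φ (forget GrpCat))) :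
    IsKanFibration f :=
  equivariant_map_isKanFibration_general A A' φ f hequiv hsurj hsurj' hφ
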